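/- In F_p, the sum δ(p) := (3p+1)!!! + Σ_{r=1}^{p-1} (3p+1)!!!/(3r+4) equals -1, where n!!! is the triple factorial and the quotients (3p+1)!!!/(3r+4) are the integers obtained by removing the factor (3r+4) from the triple factorial product (note 3r+4 ≤ 3p+1 for r ≤ p-1). -/

import Mathlib

/-!
Modulo `p` the factors `3k+1`, `0 ≤ k < p`, run through every residue exactly once, and the last
factor `3p+1` is `1`. Hence the full product vanishes, and so does every quotient except the one
omitting the unique factor `3k₀+1` divisible by `p` (here `k₀ ≥ 2` because `p > 3`, so this
factor is among the removed ones). That quotient is the product of all nonzero residues, which is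
`-1` by Wilson's theorem.
-/

open Finset

theorem FiniteField.prod_filter_ne_zero_eq_neg_one {K : Type*} [Field K] [Fintype K]
    [DecidableEq K] :
    ∏ x ∈ univ.filter (· ≠ (0 : K)), x = -1 := by
  rw [Finset.prod_subtype (p := (· ≠ 0)) _ (fun _ => by simp),
    ← Fintype.prod_equiv unitsEquivNeZero (fun u => (u : K)) _ (fun _ => rfl),
    ← Units.coe_prod, prod_univ_units_id_eq_neg_one, Units.val_neg, Units.val_one]

theorem FiniteField.prod_filter_mul_add_ne_zero {K : Type*} [Field K] [Fintype K] [DecidableEq K]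
    {a : K} (ha : a ≠ 0) (b : K) :
    ∏ x ∈ univ.filter (fun x => a * x + b ≠ 0), (a * x + b) = -1 := by
  rw [prod_filter, ← FiniteField.prod_filter_ne_zero_eq_neg_one, prod_filter]
  exact Fintype.prod_equiv ((Equiv.mulLeft₀ a ha).trans (Equiv.addRight b)) _ _ (fun _ => rfl)

theorem ZMod.prod_range_natCast {M : Type*} [CommMonoid M] (n : ℕ) [NeZero n] (g : ZMod n → M) :
    ∏ k ∈ range n, g k = ∏ x, g x :=
  prod_bij' (fun k _ => k) (fun x _ => x.val) (fun _ _ => mem_univ _)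
    (fun x _ => mem_range.2 x.val_lt) (fun _ hk => ZMod.val_cast_of_lt (mem_range.1 hk))
    (fun x _ => ZMod.natCast_zmod_val x) (fun _ _ => rfl)

theorem Finset.prod_erase_eq_prod_filter_ne_zero {ι M₀ : Type*} [CommMonoidWithZero M₀]
    [DecidableEq ι] [DecidableEq M₀] {s : Finset ι} {f : ι → M₀} {i : ι}
    (hf : ∀ j ∈ s, f j = 0 ↔ j = i) :
    ∏ j ∈ s.erase i, f j = ∏ j ∈ s.filter (f · ≠ 0), f j := by
  congr 1
  ext j
  by_cases hj : j ∈ s <;> simp [hj, hf j]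

theorem ZMod.natCast_ne_zero_of_lt {n k : ℕ} (h0 : k ≠ 0) (hk : k < n) :
    (k : ZMod n) ≠ 0 := by
  rw [Ne, ZMod.natCast_eq_zero_iff]
  exact fun h => absurd (Nat.le_of_dvd (Nat.pos_of_ne_zero h0) h) (by omega)

theorem ZMod.natCast_eq_iff_eq_val {n k : ℕ} [NeZero n] (hk : k < n) (x : ZMod n) :
    (k : ZMod n) = x ↔ k = x.val :=
  ⟨fun h => by rw [← h, ZMod.val_cast_of_lt hk], fun h => by rw [h, ZMod.natCast_zmod_val]⟩

theorem ZMod.mul_natCast_add_eq_zero_iff {p : ℕ} [Fact p.Prime] {a b : ZMod p} (ha : a ≠ 0)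
    (hb : b ≠ 0) {k : ℕ} (hk : k ≤ p) : a * k + b = 0 ↔ k = (-b / a).val := by
  rcases hk.lt_or_eq with hk | rfl
  · rw [← ZMod.natCast_eq_iff_eq_val hk, eq_div_iff ha, eq_neg_iff_add_eq_zero, mul_comm]
  · simpa [hb] using (ZMod.val_lt (-b / a)).ne'

theorem ZMod.prod_range_filter_mul_add_ne_zero {p : ℕ} [Fact p.Prime] {a : ZMod p}
    (ha : a ≠ 0) (b : ZMod p) :
    ∏ k ∈ (range p).filter (fun k : ℕ => a * k + b ≠ 0), (a * k + b) = -1 := by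
  rw [prod_filter, ← FiniteField.prod_filter_mul_add_ne_zero ha b, prod_filter,
    ← ZMod.prod_range_natCast]

theorem ZMod.three_ne_zero {p : ℕ} (hp3 : 3 < p) : (3 : ZMod p) ≠ 0 := by
  exact_mod_cast ZMod.natCast_ne_zero_of_lt (by norm_num) hp3

theorem ZMod.two_le_val_neg_one_div_three {p : ℕ} [Fact p.Prime] (hp3 : 3 < p) :
    2 ≤ (-1 / (3 : ZMod p)).val := by
  have hroot (k : ℕ) (hk : k ≤ p) := ZMod.mul_natCast_add_eq_zero_iff (ZMod.three_ne_zero hp3)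
    one_ne_zero hk
  have h0 : (-1 / (3 : ZMod p)).val ≠ 0 := fun h => by simpa using (hroot 0 (by omega)).2 h.symm
  have h1 : (-1 / (3 : ZMod p)).val ≠ 1 := fun h => by
    have h4 : ((2 ^ 2 : ℕ) : ZMod p) = 0 := by
      push_cast; linear_combination (hroot 1 (by omega)).2 h.symm
    have := (Nat.prime_dvd_prime_iff_eq Fact.out Nat.prime_two).1
      (Nat.Prime.dvd_of_dvd_pow Fact.out ((ZMod.natCast_eq_zero_iff _ _).1 h4))
    omega
  omega

/-- `δ(p) = (3p+1)!!! + ∑_{r=1}^{p-1} (3p+1)!!!/(3r+4) ≡ -1 (mod p)`, where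
`(3p+1)!!! = ∏_{k=0}^{p} (3k+1)` and `(3p+1)!!!/(3r+4)` is the integer obtained by
removing the factor `3r+4 = 3(r+1)+1` from this product. -/
theorem stmt9 {p : ℕ} (hp : p.Prime) (hp3 : 3 < p) :
    (∏ k ∈ Finset.range (p + 1), ((3 * k + 1 : ℕ) : ZMod p))
      + ∑ r ∈ Finset.Icc 1 (p - 1),
          ∏ k ∈ (Finset.range (p + 1)).erase (r + 1), ((3 * k + 1 : ℕ) : ZMod p)
      = -1 := by
  have : Fact p.Prime := ⟨hp⟩
  set f : ℕ → ZMod p := fun k => ((3 * k + 1 : ℕ) : ZMod p)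
  have hf : ∀ k, f k = 3 * k + 1 := fun k => by push_cast [f]; rfl
  set k0 := (-1 / (3 : ZMod p)).val
  have hk0 : 2 ≤ k0 ∧ k0 < p := ⟨ZMod.two_le_val_neg_one_div_three hp3, ZMod.val_lt _⟩
  have hroot : ∀ k ∈ range (p + 1), f k = 0 ↔ k = k0 := fun k hk => by
    rw [hf]
    exact ZMod.mul_natCast_add_eq_zero_iff (ZMod.three_ne_zero hp3) one_ne_zero
      (Nat.lt_succ_iff.1 (mem_range.1 hk))
  have hfk0 : f k0 = 0 := (hroot k0 (mem_range.2 (by omega))).2 rfl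
  have hsum : ∑ r ∈ Icc 1 (p - 1), ∏ k ∈ (range (p + 1)).erase (r + 1), f k
      = ∏ k ∈ (range (p + 1)).erase k0, f k := by
    rw [sum_eq_single_of_mem (k0 - 1) (mem_Icc.2 (by omega)), Nat.sub_add_cancel (by omega)]
    exact fun r hr hrk0 => prod_eq_zero (mem_erase.2 ⟨by omega, mem_range.2 (by omega)⟩) hfk0
  have hfp : f p = 1 := by simp [f]
  rw [prod_eq_zero (mem_range.2 (by omega)) hfk0, hsum, zero_add,
    prod_erase_eq_prod_filter_ne_zero hroot, range_add_one, filter_insert, if_pos (by simp [hfp]),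
    prod_insert (by simp), hfp, one_mul]
  simp only [hf]
  exact ZMod.prod_range_filter_mul_add_ne_zero (ZMod.three_ne_zero hp3) 1
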